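/- arXiv:2503.04712 — 2 statements merged into one kernel-verified Lean document; each statement's English description precedes it below -/
import Mathlib

section
/- Under the second-order self-bounding assumption, for all points x, y ∈ E with ‖y − x‖ ≤ 1/ρ0(F(x) + 1), one has F(y) ≤ F(x) + 1. -/
/-!
Along a line `t ↦ F (w + t • v)` the second derivative is at most `ρ1 c * ‖v‖ ^ 2` as long as
`F` stays below a level `c > F w`. A bootstrap argument keeps the line in that sublevel set up to
the minimum of the quadratic majorant `F w + t * fderiv ℝ F w v + ρ1 c * ‖v‖ ^ 2 * t ^ 2 / 2`,
and `F ≥ 0` there gives `(fderiv ℝ F w v) ^ 2 ≤ 2 ρ1(c) ‖v‖ ^ 2 F w`. Letting `c ↓ F w` yields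
`‖∇F w‖ ^ 2 ≤ 2 ρ1(F w) F w ≤ ρ0(F w) ^ 2`. With this gradient bound the same bootstrap shows
that on the segment from `x` to `y` the function `F` grows at rate at most
`ρ0(F x + 1) ‖y - x‖ ≤ 1` while it stays below `F x + 1`, so it never exceeds that level.
-/

open Set Filter Topology

/-- `θ(x) = ∫₀ˣ 1/ρ1(v) dv`. -/
noncomputable def sbTheta (ρ1 : ℝ → ℝ) (x : ℝ) : ℝ := ∫ v in (0 : ℝ)..x, 1 / ρ1 v

/-- `ρ0(x) = ρ1(x)·√(2 θ(x))`. -/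
noncomputable def sbRho0 (ρ1 : ℝ → ℝ) (x : ℝ) : ℝ := ρ1 x * Real.sqrt (2 * sbTheta ρ1 x)

theorem ContinuousOn.le_on_Icc_of_bootstrap {α β : Type*} [ConditionallyCompleteLinearOrder α]
    [TopologicalSpace α] [OrderTopology α] [DenselyOrdered α] [LinearOrder β] [TopologicalSpace β]
    [OrderClosedTopology β] {g : α → β} {a b : α} {c : β}
    (hg : ContinuousOn g (Icc a b)) (ha : g a ≤ c)
    (hstep : ∀ t ∈ Ico a b, (∀ τ ∈ Icc a t, g τ ≤ c) → g t < c) :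
    ∀ t ∈ Icc a b, g t ≤ c := by
  have hclosed : IsClosed ({t | g t ≤ c} ∩ Icc a b) := by
    rw [inter_comm]
    exact hg.preimage_isClosed_of_isClosed isClosed_Icc isClosed_Iic
  refine fun t ht ↦ hclosed.Icc_subset_of_forall_mem_nhdsGT_of_Icc_subset ha (fun t ht hle ↦ ?_) ht
  have hlt : ∀ᶠ τ in 𝓝[Icc a b] t, g τ < c :=
    hg t (Ico_subset_Icc_self ht) (Iio_mem_nhds (hstep t ht hle))
  exact (hlt.filter_mono (nhdsWithin_le_of_mem (Icc_mem_nhdsGT_of_mem ht))).mono fun _ ↦ le_of_lt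

theorem image_le_taylor_two_of_deriv2_le {h h' h'' : ℝ → ℝ} {a b m : ℝ}
    (hd1 : ∀ t ∈ Icc a b, HasDerivAt h (h' t) t) (hd2 : ∀ t ∈ Icc a b, HasDerivAt h' (h'' t) t)
    (hm : ∀ t ∈ Icc a b, h'' t ≤ m) :
    ∀ t ∈ Icc a b, h t ≤ h a + h' a * (t - a) + m * (t - a) ^ 2 / 2 := by
  have hB1 (t : ℝ) : HasDerivAt (fun t ↦ h' a + m * (t - a)) m t := by
    simpa using ((hasDerivAt_id t).sub_const a).const_mul m |>.const_add (h' a)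
  have hB2 (t : ℝ) : HasDerivAt (fun t ↦ h a + h' a * (t - a) + m * (t - a) ^ 2 / 2)
      (h' a + m * (t - a)) t := by
    have := ((((hasDerivAt_id t).sub_const a).const_mul (h' a)).const_add (h a)).add
      ((((hasDerivAt_id t).sub_const a).pow 2).const_mul m |>.div_const 2)
    refine this.congr_deriv ?_
    simp only [id, Nat.cast_ofNat, mul_one]
    ring
  have hslope : ∀ t ∈ Icc a b, h' t ≤ h' a + m * (t - a) :=
    image_le_of_deriv_right_le_deriv_boundary
      (fun t ht ↦ (hd2 t ht).continuousAt.continuousWithinAt)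
      (fun t ht ↦ (hd2 t (Ico_subset_Icc_self ht)).hasDerivWithinAt) (by simp)
      (fun t _ ↦ (hB1 t).continuousAt.continuousWithinAt) (fun t _ ↦ (hB1 t).hasDerivWithinAt)
      (fun t ht ↦ hm t (Ico_subset_Icc_self ht))
  exact image_le_of_deriv_right_le_deriv_boundary
    (fun t ht ↦ (hd1 t ht).continuousAt.continuousWithinAt)
    (fun t ht ↦ (hd1 t (Ico_subset_Icc_self ht)).hasDerivWithinAt) (by simp)
    (fun t _ ↦ (hB2 t).continuousAt.continuousWithinAt) (fun t _ ↦ (hB2 t).hasDerivWithinAt)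
    (fun t ht ↦ hslope t (Ico_subset_Icc_self ht))

theorem le_of_deriv_le_on_sublevel {g g' : ℝ → ℝ} {b c L : ℝ} (hL : 0 < L) (hb : 0 ≤ b)
    (hd : ∀ t, HasDerivAt g (g' t) t) (hsub : ∀ t, g t ≤ c → g' t ≤ L) (hc : g 0 + L * b ≤ c) :
    g b ≤ c := by
  have hg : Continuous g := continuous_iff_continuousAt.2 fun t ↦ (hd t).continuousAt
  refine hg.continuousOn.le_on_Icc_of_bootstrap (by nlinarith) (fun t ht hle ↦ ?_) b ⟨hb, le_rfl⟩
  have hgrowth : g t - g 0 ≤ L * (t - 0) :=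
    (convex_Icc 0 t).image_sub_le_mul_sub_of_deriv_le hg.continuousOn
      (fun s _ ↦ (hd s).differentiableAt.differentiableWithinAt)
      (fun s hs ↦ (hd s).deriv ▸ hsub s (hle s (interior_subset hs)))
      0 (left_mem_Icc.2 ht.1) t (right_mem_Icc.2 ht.1) ht.1
  nlinarith [ht.2]

theorem sq_deriv_le_of_deriv2_le_on_sublevel {h h' h'' : ℝ → ℝ} {c m : ℝ} (hm : 0 < m)
    (hc : h 0 < c) (hnn : ∀ t, 0 ≤ h t) (hd1 : ∀ t, HasDerivAt h (h' t) t)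
    (hd2 : ∀ t, HasDerivAt h' (h'' t) t) (hsub : ∀ t, h t ≤ c → h'' t ≤ m) (hneg : h' 0 ≤ 0) :
    h' 0 ^ 2 ≤ 2 * m * h 0 := by
  set t₀ := -h' 0 / m
  have ht₀ : 0 ≤ t₀ := div_nonneg (neg_nonneg.2 hneg) hm.le
  have htaylor (T : ℝ) (hT : ∀ t ∈ Icc 0 T, h t ≤ c) :
      ∀ t ∈ Icc 0 T, h t ≤ h 0 + h' 0 * t + m * t ^ 2 / 2 := by
    simpa using image_le_taylor_two_of_deriv2_le (fun t _ ↦ hd1 t) (fun t _ ↦ hd2 t)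
      (fun t ht ↦ hsub t (hT t ht))
  have hquad : ∀ t ∈ Icc 0 t₀, h' 0 * t + m * t ^ 2 / 2 ≤ 0 := by
    intro t ht
    have : m * t ≤ -h' 0 := by rw [← le_div_iff₀' hm]; exact ht.2
    nlinarith [ht.1]
  have hcont : Continuous h := continuous_iff_continuousAt.2 fun t ↦ (hd1 t).continuousAt
  have hconfined : ∀ t ∈ Icc 0 t₀, h t ≤ c :=
    hcont.continuousOn.le_on_Icc_of_bootstrap hc.le fun t ht hle ↦ by
      linarith [htaylor t hle t (right_mem_Icc.2 ht.1), hquad t (Ico_subset_Icc_self ht)]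
  have hfinal := htaylor t₀ hconfined t₀ (right_mem_Icc.2 ht₀)
  have hmin : h' 0 * t₀ + m * t₀ ^ 2 / 2 = -(h' 0 ^ 2 / (2 * m)) := by
    simp only [t₀]; field_simp; ring
  have hbound : h' 0 ^ 2 / (2 * m) ≤ h 0 := by linarith [hnn t₀]
  rwa [div_le_iff₀ (by positivity), mul_comm] at hbound

section Rho

variable {ρ1 : ℝ → ℝ}

theorem intervalIntegrable_one_div_of_continuousOn_Ici (hcont : ContinuousOn ρ1 (Ici 0))
    (hpos : ∀ x ∈ Ici (0 : ℝ), 0 < ρ1 x) {x : ℝ} (hx : 0 ≤ x) :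
    IntervalIntegrable (fun v ↦ 1 / ρ1 v) MeasureTheory.volume 0 x :=
  ContinuousOn.intervalIntegrable_of_Icc hx <|
    continuousOn_const.div (hcont.mono Icc_subset_Ici_self) fun v hv ↦ (hpos v hv.1).ne'

theorem sbTheta_monotoneOn (hcont : ContinuousOn ρ1 (Ici 0))
    (hpos : ∀ x ∈ Ici (0 : ℝ), 0 < ρ1 x) : MonotoneOn (sbTheta ρ1) (Ici 0) :=
  fun _ ha _ hb hab ↦ intervalIntegral.integral_mono_interval le_rfl ha hab
    (MeasureTheory.ae_restrict_of_forall_mem measurableSet_Ioc fun v hv ↦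
      (one_div_pos.2 (hpos v (le_of_lt hv.1))).le)
    (intervalIntegrable_one_div_of_continuousOn_Ici hcont hpos hb)

theorem le_mul_sbTheta (hmono : MonotoneOn ρ1 (Ici 0)) (hcont : ContinuousOn ρ1 (Ici 0))
    (hpos : ∀ x ∈ Ici (0 : ℝ), 0 < ρ1 x) {x : ℝ} (hx : 0 ≤ x) : x ≤ ρ1 x * sbTheta ρ1 x := by
  have hint : ∫ _ in (0 : ℝ)..x, 1 / ρ1 x ≤ sbTheta ρ1 x :=
    intervalIntegral.integral_mono_on hx intervalIntegrable_const
      (intervalIntegrable_one_div_of_continuousOn_Ici hcont hpos hx)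
      fun v hv ↦ one_div_le_one_div_of_le (hpos v hv.1) (hmono hv.1 hx hv.2)
  rw [intervalIntegral.integral_const, smul_eq_mul, sub_zero, ← div_eq_mul_one_div,
    div_le_iff₀' (hpos x hx)] at hint
  exact hint

theorem sbRho0_nonneg (hpos : ∀ x ∈ Ici (0 : ℝ), 0 < ρ1 x) {x : ℝ} (hx : 0 ≤ x) :
    0 ≤ sbRho0 ρ1 x :=
  mul_nonneg (hpos x hx).le (Real.sqrt_nonneg _)

theorem sbRho0_monotoneOn (hmono : MonotoneOn ρ1 (Ici 0)) (hcont : ContinuousOn ρ1 (Ici 0))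
    (hpos : ∀ x ∈ Ici (0 : ℝ), 0 < ρ1 x) : MonotoneOn (sbRho0 ρ1) (Ici 0) :=
  fun a ha b hb hab ↦ mul_le_mul (hmono ha hb hab)
    (Real.sqrt_le_sqrt (by linarith [sbTheta_monotoneOn hcont hpos ha hb hab]))
    (Real.sqrt_nonneg _) (hpos b hb).le

theorem sqrt_two_mul_mul_le_sbRho0 (hmono : MonotoneOn ρ1 (Ici 0))
    (hcont : ContinuousOn ρ1 (Ici 0)) (hpos : ∀ x ∈ Ici (0 : ℝ), 0 < ρ1 x) {x : ℝ} (hx : 0 ≤ x) :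
    √(2 * ρ1 x * x) ≤ sbRho0 ρ1 x := by
  have hρ := hpos x hx
  have hθ := le_mul_sbTheta hmono hcont hpos hx
  calc √(2 * ρ1 x * x) ≤ √(ρ1 x ^ 2 * (2 * sbTheta ρ1 x)) := Real.sqrt_le_sqrt (by nlinarith)
    _ = sbRho0 ρ1 x := by rw [Real.sqrt_mul (sq_nonneg _), Real.sqrt_sq hρ.le, sbRho0]

end Rho

theorem hasDerivAt_comp_add_smul {E G : Type*} [NormedAddCommGroup E] [NormedSpace ℝ E]
    [NormedAddCommGroup G] [NormedSpace ℝ G] {f : E → G} (hf : Differentiable ℝ f) (x v : E)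
    (t : ℝ) :
    HasDerivAt (fun s : ℝ ↦ f (x + s • v)) (fderiv ℝ f (x + t • v) v) t := by
  have hline : HasDerivAt (fun s : ℝ ↦ x + s • v) v t := by
    simpa using ((hasDerivAt_id t).smul_const v).const_add x
  exact (hf _).hasFDerivAt.comp_hasDerivAt t hline

section SelfBounding

variable {E : Type*} [NormedAddCommGroup E] [NormedSpace ℝ E] {F : E → ℝ} {ρ1 : ℝ → ℝ}

theorem sq_fderiv_apply_le_of_selfBounding (hF : ContDiff ℝ 2 F) (hFnn : ∀ w, 0 ≤ F w)
    (hmono : MonotoneOn ρ1 (Ici 0)) (hpos : ∀ x ∈ Ici (0 : ℝ), 0 < ρ1 x)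
    (hbound : ∀ w, ‖fderiv ℝ (fderiv ℝ F) w‖ ≤ ρ1 (F w)) {w : E} {c : ℝ} (hc : F w < c) (v : E) :
    fderiv ℝ F w v ^ 2 ≤ 2 * (ρ1 c * ‖v‖ ^ 2) * F w := by
  wlog hneg : fderiv ℝ F w v ≤ 0 generalizing v
  · simpa using this (-v) (by simp; linarith)
  rcases eq_or_ne v 0 with rfl | hv
  · simp
  have hc0 : 0 ≤ c := (hFnn w).trans hc.le
  have hd1 := hasDerivAt_comp_add_smul (hF.differentiable two_ne_zero) w v
  have hF' : Differentiable ℝ (fderiv ℝ F) :=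
    (hF.fderiv_right one_add_one_eq_two.le).differentiable one_ne_zero
  have hd2 (t : ℝ) := (hasDerivAt_comp_add_smul hF' w v t).clm_apply (hasDerivAt_const t v)
  simp only [map_zero, add_zero] at hd2
  have hsub (t : ℝ) (ht : F (w + t • v) ≤ c) :
      fderiv ℝ (fderiv ℝ F) (w + t • v) v v ≤ ρ1 c * ‖v‖ ^ 2 := calc
    _ ≤ ‖fderiv ℝ (fderiv ℝ F) (w + t • v)‖ * ‖v‖ * ‖v‖ := (Real.le_norm_self _).trans
      (ContinuousLinearMap.le_opNorm₂ _ v v)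
    _ ≤ ρ1 c * ‖v‖ ^ 2 := by
      rw [mul_assoc, ← sq]
      gcongr
      exact (hbound _).trans (hmono (hFnn _) hc0 ht)
  simpa using sq_deriv_le_of_deriv2_le_on_sublevel (by have := hpos c hc0; positivity)
    (by simpa using hc) (fun _ ↦ hFnn _) hd1 hd2 hsub (by simpa using hneg)

theorem norm_fderiv_le_sbRho0 (hF : ContDiff ℝ 2 F) (hFnn : ∀ w, 0 ≤ F w)
    (hmono : MonotoneOn ρ1 (Ici 0)) (hcont : ContinuousOn ρ1 (Ici 0))
    (hpos : ∀ x ∈ Ici (0 : ℝ), 0 < ρ1 x) (hbound : ∀ w, ‖fderiv ℝ (fderiv ℝ F) w‖ ≤ ρ1 (F w))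
    (w : E) :
    ‖fderiv ℝ F w‖ ≤ sbRho0 ρ1 (F w) := by
  have hsq (v : E) : fderiv ℝ F w v ^ 2 ≤ 2 * (ρ1 (F w) * ‖v‖ ^ 2) * F w := by
    have hρ1 : Tendsto ρ1 (𝓝[>] (F w)) (𝓝 (ρ1 (F w))) :=
      ((hcont _ (hFnn w)).mono (Ioi_subset_Ici (hFnn w))).tendsto
    refine ge_of_tendsto (((hρ1.mul_const _).const_mul 2).mul_const _)
      (eventually_nhdsWithin_of_forall fun c hc ↦ ?_)
    exact sq_fderiv_apply_le_of_selfBounding hF hFnn hmono hpos hbound hc v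
  refine (ContinuousLinearMap.opNorm_le_bound _ (Real.sqrt_nonneg _) fun v ↦ ?_).trans
    (sqrt_two_mul_mul_le_sbRho0 hmono hcont hpos (hFnn w))
  rw [Real.norm_eq_abs, ← Real.sqrt_sq (norm_nonneg v), ← Real.sqrt_mul' _ (sq_nonneg _)]
  exact Real.abs_le_sqrt (by linarith [hsq v])

end SelfBounding

theorem funcvalue_control_of_selfbounding_general (d : ℕ)
    (F : EuclideanSpace ℝ (Fin d) → ℝ)
    (hF : ContDiff ℝ 2 F) (hFnn : ∀ w, 0 ≤ F w)
    (ρ1 : ℝ → ℝ) (hρ1mono : MonotoneOn ρ1 (Set.Ici 0))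
    (hρ1cont : ContinuousOn ρ1 (Set.Ici 0))
    (hρ1pos : ∀ x ∈ Set.Ici (0 : ℝ), 0 < ρ1 x)
    (hbound : ∀ w, ‖fderiv ℝ (fderiv ℝ F) w‖ ≤ ρ1 (F w)) :
    ∀ x y : EuclideanSpace ℝ (Fin d),
      ‖y - x‖ ≤ 1 / sbRho0 ρ1 (F x + 1) → F y ≤ F x + 1 := by
  intro x y hxy
  have hc : 0 ≤ F x + 1 := by linarith [hFnn x]
  have hstep : ‖y - x‖ * sbRho0 ρ1 (F x + 1) ≤ 1 :=
    mul_le_of_le_div₀ zero_le_one (sbRho0_nonneg hρ1pos hc) hxy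
  have hslope (t : ℝ) (ht : F (x + t • (y - x)) ≤ F x + 1) :
      fderiv ℝ F (x + t • (y - x)) (y - x) ≤ 1 := calc
    _ ≤ ‖fderiv ℝ F (x + t • (y - x))‖ * ‖y - x‖ :=
      (Real.le_norm_self _).trans (ContinuousLinearMap.le_opNorm _ _)
    _ ≤ sbRho0 ρ1 (F x + 1) * ‖y - x‖ := by
      gcongr
      exact (norm_fderiv_le_sbRho0 hF hFnn hρ1mono hρ1cont hρ1pos hbound _).trans
        (sbRho0_monotoneOn hρ1mono hρ1cont hρ1pos (hFnn _) hc ht)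
    _ ≤ 1 := by linarith
  simpa using le_of_deriv_le_on_sublevel one_pos zero_le_one
    (hasDerivAt_comp_add_smul (hF.differentiable two_ne_zero) x (y - x)) hslope (by simp)

/-- Under the second-order self-bounding assumption, if `‖y − x‖ ≤ 1/ρ0(F(x) + 1)`
then `F(y) ≤ F(x) + 1`. -/
theorem funcvalue_control_of_selfbounding (d : ℕ) (hd : 1 ≤ d)
    (F : EuclideanSpace ℝ (Fin d) → ℝ)
    (hF : ContDiff ℝ 2 F) (hFnn : ∀ w, 0 ≤ F w)
    (ρ1 : ℝ → ℝ) (hρ1mono : MonotoneOn ρ1 (Set.Ici 0))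
    (hρ1cont : ContinuousOn ρ1 (Set.Ici 0))
    (hρ1pos : ∀ x ∈ Set.Ici (0 : ℝ), 0 < ρ1 x)
    (hbound : ∀ w, ‖fderiv ℝ (fderiv ℝ F) w‖ ≤ ρ1 (F w)) :
    ∀ x y : EuclideanSpace ℝ (Fin d),
      ‖y - x‖ ≤ 1 / sbRho0 ρ1 (F x + 1) → F y ≤ F x + 1 :=
  funcvalue_control_of_selfbounding_general d F hF hFnn ρ1 hρ1mono hρ1cont hρ1pos hbound
end

section
/- Under the second-order self-bounding assumption, fix w0 ∈ E and ε > 0, set L1′(w0) = ρ1(F(w0)+1), and define adaptive gradient-descent iterates starting from w0 by w_{t+1} = w_t − η_{w_t}·∇F(w_t), where η_w = min{1/L1′(w0), 1/(ρ0(F(w0)+1)·‖∇F(w)‖)} when ∇F(w) ≠ 0 (if ∇F(w_t) = 0 the iterate is already ε-stationary). Then there exists a natural number t with t ≤ 2·F(w0)/min{L1′(w0)/ρ0(F(w0)+1)², ε²/L1′(w0)} such that ‖∇F(w_t)‖ ≤ ε. -/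
open Set

theorem ContinuousOn.forall_lt_of_le_while_lt {f : ℝ → ℝ} {p q a b : ℝ}
    (hf : ContinuousOn f (Icc p q)) (hba : b < a)
    (h : ∀ s ∈ Icc p q, (∀ r ∈ Ico p s, f r < a) → f s ≤ b) :
    ∀ s ∈ Icc p q, f s < a := by
  by_contra! ⟨s, hs, has⟩
  -- `s₀` is the first time `f` reaches `a`
  obtain ⟨s₀, ⟨hs₀, has₀⟩, hleast⟩ :=
    (isCompact_Icc.of_isClosed_subset (hf.preimage_isClosed_of_isClosed isClosed_Icc isClosed_Ici)
      inter_subset_left).exists_isLeast ⟨s, hs, has⟩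
  have hbefore : ∀ r ∈ Ico p s₀, f r < a := fun r hr =>
    not_le.1 fun har => (hr.2.trans_le (hleast ⟨⟨hr.1, hr.2.le.trans hs₀.2⟩, har⟩)).false
  exact (hba.trans_le has₀).not_ge (h s₀ hs₀ hbefore)

theorem le_add_mul_add_of_deriv2_le {φ φ' φ'' : ℝ → ℝ} {M s : ℝ} (hs : 0 ≤ s)
    (hφ : ∀ r, HasDerivAt φ (φ' r) r) (hφ' : ∀ r, HasDerivAt φ' (φ'' r) r)
    (hM : ∀ r ∈ Ioo 0 s, φ'' r ≤ M) :
    φ s ≤ φ 0 + s * φ' 0 + M * s ^ 2 / 2 := by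
  have hslope : ∀ r ∈ Icc 0 s, φ' r - M * r ≤ φ' 0 := by
    have hanti : AntitoneOn (fun r => φ' r - M * r) (Icc 0 s) := by
      refine antitoneOn_of_hasDerivWithinAt_nonpos (convex_Icc 0 s)
        (fun r _ => ((hφ' r).sub ((hasDerivAt_id r).const_mul M)).continuousAt.continuousWithinAt)
        (fun r _ => ((hφ' r).sub ((hasDerivAt_id r).const_mul M)).hasDerivWithinAt) ?_
      intro r hr
      rw [interior_Icc] at hr
      simpa using hM r hr
    intro r hr
    simpa using hanti ⟨le_rfl, hs⟩ hr hr.1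
  have hanti : AntitoneOn (fun r => φ r - r * φ' 0 - M * r ^ 2 / 2) (Icc 0 s) := by
    have hderiv : ∀ r, HasDerivAt (fun r => φ r - r * φ' 0 - M * r ^ 2 / 2)
        (φ' r - φ' 0 - M * r) r := fun r => by
      refine (((hφ r).sub ((hasDerivAt_id r).mul_const (φ' 0))).sub
        (((hasDerivAt_pow 2 r).const_mul M).div_const 2)).congr_deriv ?_
      norm_num
      ring
    refine antitoneOn_of_hasDerivWithinAt_nonpos (convex_Icc 0 s)
      (fun r _ => (hderiv r).continuousAt.continuousWithinAt)
      (fun r _ => (hderiv r).hasDerivWithinAt) fun r hr => ?_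
    rw [interior_Icc] at hr
    linarith [hslope r (Ioo_subset_Icc_self hr)]
  have := hanti ⟨le_rfl, hs⟩ ⟨hs, le_rfl⟩ hs
  simp only at this
  linarith

theorem min_one_div_mul_le_one_div {L R g : ℝ} (hR : 0 < R) (hg : 0 ≤ g) :
    min (1 / L) (1 / (R * g)) * g ≤ 1 / R := by
  rcases hg.eq_or_lt with rfl | hg
  · simp [hR.le]
  · calc min (1 / L) (1 / (R * g)) * g ≤ 1 / (R * g) * g := by gcongr; exact min_le_right _ _
      _ = 1 / R := by field_simp

theorem min_div_sq_le_min_one_div_mul_sq {L R ε g : ℝ} (hL : 0 < L) (hR : 0 < R) (hε : 0 ≤ ε)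
    (hg : ε ≤ g) : min (L / R ^ 2) (ε ^ 2 / L) ≤ min (1 / L) (1 / (R * g)) * g ^ 2 := by
  rcases (hε.trans hg).eq_or_lt with rfl | hg0
  · simp [le_antisymm hg hε]
  rw [min_mul_of_nonneg _ _ (sq_nonneg g)]
  have hεg : ε ^ 2 / L ≤ g ^ 2 / L := by gcongr
  have hstep : 1 / (R * g) * g ^ 2 = g / R := by field_simp
  refine le_min ((min_le_right _ _).trans (hεg.trans_eq (by ring))) (hstep ▸ ?_)
  rcases le_total (L / R) g with h | h
  · calc min (L / R ^ 2) (ε ^ 2 / L) ≤ L / R ^ 2 := min_le_left _ _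
      _ = L / R / R := by ring
      _ ≤ g / R := by gcongr
  · calc min (L / R ^ 2) (ε ^ 2 / L) ≤ g ^ 2 / L := (min_le_right _ _).trans hεg
      _ ≤ g / R := by
        rw [div_le_div_iff₀ hL hR]
        rw [le_div_iff₀ hR] at h
        nlinarith

section Descent

variable {E : Type*} [NormedAddCommGroup E] [InnerProductSpace ℝ E] [CompleteSpace E]
  {F : E → ℝ} {L a : ℝ}

theorem le_add_inner_add_of_norm_fderiv_fderiv_le (hF : ContDiff ℝ 2 F) (hL : 0 ≤ L)
    (hB : ∀ x, F x < a → ‖fderiv ℝ (fderiv ℝ F) x‖ ≤ L) {u v : E}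
    (hinner : inner ℝ (gradient F u) v ≤ 0) (hslack : F u + L * ‖v‖ ^ 2 / 2 < a) :
    F (u + v) ≤ F u + inner ℝ (gradient F u) v + L * ‖v‖ ^ 2 / 2 := by
  have hc : ∀ s : ℝ, HasDerivAt (fun r : ℝ => u + r • v) v s := fun s => by
    simpa using ((hasDerivAt_id s).smul_const v).const_add u
  have hφ : ∀ s : ℝ, HasDerivAt (fun r : ℝ => F (u + r • v)) (fderiv ℝ F (u + s • v) v) s :=
    fun s => ((hF.differentiable two_ne_zero) _).hasFDerivAt.comp_hasDerivAt s (hc s)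
  have hφ' : ∀ s : ℝ, HasDerivAt (fun r : ℝ => fderiv ℝ F (u + r • v) v)
      (fderiv ℝ (fderiv ℝ F) (u + s • v) v v) s := fun s =>
    ((ContinuousLinearMap.apply ℝ ℝ v).hasFDerivAt.comp _
      (((hF.fderiv_right (by norm_num)).differentiable one_ne_zero) _).hasFDerivAt).comp_hasDerivAt
      s (hc s)
  have htaylor : ∀ s ∈ Icc (0 : ℝ) 1, (∀ r ∈ Ico 0 s, F (u + r • v) < a) →
      F (u + s • v) ≤ F u + s * inner ℝ (gradient F u) v + L * ‖v‖ ^ 2 * s ^ 2 / 2 := by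
    intro s hs hsub
    have := le_add_mul_add_of_deriv2_le hs.1 hφ hφ' fun r hr =>
      (le_abs_self _).trans <| ((fderiv ℝ (fderiv ℝ F) (u + r • v)).le_opNorm₂ v v).trans <| by
        rw [mul_assoc, ← sq]
        exact mul_le_mul_of_nonneg_right (hB _ (hsub r (Ioo_subset_Ico_self hr))) (by positivity)
    simpa [inner_gradient_left] using this
  have htrapped : ∀ s ∈ Icc (0 : ℝ) 1, F (u + s • v) < a := by
    refine ContinuousOn.forall_lt_of_le_while_lt (b := F u + L * ‖v‖ ^ 2 / 2)
      (fun s _ => (hφ s).continuousAt.continuousWithinAt) hslack fun s hs hsub => ?_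
    have hs2 : s ^ 2 ≤ 1 := pow_le_one₀ hs.1 hs.2
    have := htaylor s hs hsub
    nlinarith [mul_nonpos_of_nonneg_of_nonpos hs.1 hinner, mul_nonneg hL (sq_nonneg ‖v‖)]
  simpa using htaylor 1 ⟨zero_le_one, le_rfl⟩ fun r hr => htrapped r (Ico_subset_Icc_self hr)

theorem le_sub_of_gradient_step (hF : ContDiff ℝ 2 F) (hL : 0 ≤ L)
    (hB : ∀ x, F x < a → ‖fderiv ℝ (fderiv ℝ F) x‖ ≤ L) {u : E} {η : ℝ} (hη : 0 ≤ η)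
    (hLη : L * η ≤ 1) (hslack : F u + L * (η * ‖gradient F u‖) ^ 2 / 2 < a) :
    F (u - η • gradient F u) ≤ F u - η / 2 * ‖gradient F u‖ ^ 2 := by
  have hnorm : ‖-(η • gradient F u)‖ = η * ‖gradient F u‖ := by
    rw [norm_neg, norm_smul, Real.norm_of_nonneg hη]
  have hinner : inner ℝ (gradient F u) (-(η • gradient F u)) = -(η * ‖gradient F u‖ ^ 2) := by
    rw [inner_neg_right, real_inner_smul_right, real_inner_self_eq_norm_sq]
  have := le_add_inner_add_of_norm_fderiv_fderiv_le hF hL hB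
    (hinner.trans_le (neg_nonpos.2 (by positivity))) (hnorm ▸ hslack)
  rw [← sub_eq_add_neg, hinner, hnorm] at this
  nlinarith [mul_nonneg hη (sq_nonneg ‖gradient F u‖)]

theorem le_sub_of_adaptive_gradient_step (hF : ContDiff ℝ 2 F) (hL : 0 < L)
    (hB : ∀ x, F x < a → ‖fderiv ℝ (fderiv ℝ F) x‖ ≤ L) {R : ℝ} (hR : 0 < R) {u : E}
    (hslack : F u + L / (2 * R ^ 2) < a) :
    F (u - min (1 / L) (1 / (R * ‖gradient F u‖)) • gradient F u) ≤
      F u - min (1 / L) (1 / (R * ‖gradient F u‖)) / 2 * ‖gradient F u‖ ^ 2 := by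
  refine le_sub_of_gradient_step hF hL.le hB (by positivity) ?_ (lt_of_le_of_lt ?_ hslack)
  · calc L * min (1 / L) (1 / (R * ‖gradient F u‖)) ≤ L * (1 / L) := by
          gcongr; exact min_le_left _ _
      _ = 1 := by field_simp
  · have := min_one_div_mul_le_one_div (L := L) hR (norm_nonneg (gradient F u))
    calc F u + L * (min (1 / L) (1 / (R * ‖gradient F u‖)) * ‖gradient F u‖) ^ 2 / 2
        ≤ F u + L * (1 / R) ^ 2 / 2 := by gcongr
      _ = F u + L / (2 * R ^ 2) := by ring

end Descent

theorem div_le_sbTheta {ρ1 : ℝ → ℝ} (hmono : MonotoneOn ρ1 (Ici 0))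
    (hpos : ∀ x ∈ Ici (0 : ℝ), 0 < ρ1 x) {x : ℝ} (hx : 0 ≤ x) : x / ρ1 x ≤ sbTheta ρ1 x := by
  have hle : ∀ v ∈ Icc 0 x, 1 / ρ1 x ≤ 1 / ρ1 v := fun v hv =>
    one_div_le_one_div_of_le (hpos v hv.1) (hmono hv.1 hx hv.2)
  have hint : IntervalIntegrable (fun v => 1 / ρ1 v) MeasureTheory.volume 0 x := by
    refine AntitoneOn.intervalIntegrable fun v hv w hw hvw => ?_
    rw [uIcc_of_le hx] at hv hw
    exact one_div_le_one_div_of_le (hpos v hv.1) (hmono hv.1 hw.1 hvw)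
  have := intervalIntegral.integral_mono_on hx intervalIntegrable_const hint hle
  rwa [intervalIntegral.integral_const, sub_zero, smul_eq_mul, ← div_eq_mul_one_div] at this

theorem two_mul_mul_le_sbRho0_sq {ρ1 : ℝ → ℝ} (hmono : MonotoneOn ρ1 (Ici 0))
    (hpos : ∀ x ∈ Ici (0 : ℝ), 0 < ρ1 x) {x : ℝ} (hx : 0 ≤ x) :
    2 * ρ1 x * x ≤ sbRho0 ρ1 x ^ 2 := by
  have hθ := div_le_sbTheta hmono hpos hx
  have hρ := hpos x hx
  rw [div_le_iff₀ hρ] at hθ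
  rw [sbRho0, mul_pow, Real.sq_sqrt (by nlinarith)]
  nlinarith

theorem sbRho0_pos {ρ1 : ℝ → ℝ} (hmono : MonotoneOn ρ1 (Ici 0))
    (hpos : ∀ x ∈ Ici (0 : ℝ), 0 < ρ1 x) {x : ℝ} (hx : 0 < x) : 0 < sbRho0 ρ1 x :=
  mul_pos (hpos x hx.le) <| Real.sqrt_pos.2 <|
    mul_pos two_pos ((div_pos hx (hpos x hx.le)).trans_le (div_le_sbTheta hmono hpos hx.le))

theorem exists_le_div_of_sub_le_of_not {f : ℕ → ℝ} {c : ℝ} {P : ℕ → Prop} (hf : ∀ t, 0 ≤ f t)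
    (hc : 0 < c) (hdec : ∀ t, ¬P t → f (t + 1) ≤ f t - c) :
    ∃ t : ℕ, (t : ℝ) ≤ f 0 / c ∧ P t := by
  by_contra! hnot
  set N := ⌊f 0 / c⌋₊
  have hdrop : ∀ n ≤ N + 1, f n ≤ f 0 - n * c := by
    intro n hn
    induction n with
    | zero => simp
    | succ n ih =>
      have hnN : (n : ℝ) ≤ f 0 / c :=
        (Nat.cast_le.2 (Nat.le_of_lt_succ hn)).trans (Nat.floor_le (div_nonneg (hf 0) hc.le))
      have := hdec n (hnot n hnN)
      push_cast
      linarith [ih (Nat.le_of_succ_le hn)]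
  have hlt : f 0 / c < (N + 1 : ℕ) := by exact_mod_cast Nat.lt_floor_add_one (f 0 / c)
  rw [div_lt_iff₀ hc] at hlt
  linarith [hdrop (N + 1) le_rfl, hf (N + 1)]

theorem adaptive_gd_finds_fosp_of_selfbounding_general (d : ℕ)
    (F : EuclideanSpace ℝ (Fin d) → ℝ)
    (hF : ContDiff ℝ 2 F) (hFnn : ∀ w, 0 ≤ F w)
    (ρ1 : ℝ → ℝ) (hρ1mono : MonotoneOn ρ1 (Set.Ici 0))
    (hρ1pos : ∀ x ∈ Set.Ici (0 : ℝ), 0 < ρ1 x)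
    (hbound : ∀ w, ‖fderiv ℝ (fderiv ℝ F) w‖ ≤ ρ1 (F w))
    (w0 : EuclideanSpace ℝ (Fin d)) (ε : ℝ) (hε : 0 < ε)
    (L1'w0 : ℝ) (hL1'w0 : L1'w0 = ρ1 (F w0 + 1))
    (w : ℕ → EuclideanSpace ℝ (Fin d)) (hw0 : w 0 = w0)
    (hrec : ∀ t, w (t + 1) = w t -
      (min (1 / L1'w0) (1 / (sbRho0 ρ1 (F w0 + 1) * ‖gradient F (w t)‖)))
        • gradient F (w t)) :
    ∃ t : ℕ,
      (t : ℝ) ≤ 2 * F w0 / min (L1'w0 / sbRho0 ρ1 (F w0 + 1) ^ 2) (ε ^ 2 / L1'w0) ∧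
      ‖gradient F (w t)‖ ≤ ε := by
  subst hL1'w0
  set a := F w0 + 1
  set L := ρ1 a
  set R := sbRho0 ρ1 a
  have ha : 1 ≤ a := by linarith [hFnn w0]
  have ha0 : a ∈ Ici 0 := zero_le_one.trans ha
  have hL : 0 < L := hρ1pos a ha0
  have hR : 0 < R := sbRho0_pos hρ1mono hρ1pos (zero_lt_one.trans_le ha)
  have hslack : L / (2 * R ^ 2) < 1 := by
    rw [div_lt_one (by positivity)]
    nlinarith [two_mul_mul_le_sbRho0_sq hρ1mono hρ1pos ha0]
  have hB : ∀ x, F x < a → ‖fderiv ℝ (fderiv ℝ F) x‖ ≤ L := fun x hx =>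
    (hbound x).trans (hρ1mono (hFnn x) ha0 hx.le)
  have hstep : ∀ t, F (w t) ≤ F w0 → F (w (t + 1)) ≤ F (w t) -
      min (1 / L) (1 / (R * ‖gradient F (w t)‖)) / 2 * ‖gradient F (w t)‖ ^ 2 := fun t ht =>
    hrec t ▸ le_sub_of_adaptive_gradient_step hF hL hB hR (by linarith)
  have hsublevel : ∀ t, F (w t) ≤ F w0 := fun t => by
    induction t with
    | zero => rw [hw0]
    | succ t ih => exact ((hstep t ih).trans (sub_le_self _ (by positivity))).trans ih
  have hprogress : ∀ t, ¬‖gradient F (w t)‖ ≤ ε →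
      F (w (t + 1)) ≤ F (w t) - min (L / R ^ 2) (ε ^ 2 / L) / 2 := fun t hfar => by
    have := min_div_sq_le_min_one_div_mul_sq hL hR hε.le (le_of_not_ge hfar)
    linarith [hstep t (hsublevel t)]
  obtain ⟨t, ht, hgrad⟩ :=
    exists_le_div_of_sub_le_of_not (fun t => hFnn (w t)) (by positivity) hprogress
  refine ⟨t, ht.trans_eq ?_, hgrad⟩
  rw [hw0]
  ring

/-- Adaptive gradient descent with step sizes
`η_w = min {1/L1′(w0), 1/(ρ0(F(w0)+1)·‖∇F(w)‖)}` started at `w0` finds an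
`ε`-stationary point within `2 F(w0) / min {L1′(w0)/ρ0(F(w0)+1)², ε²/L1′(w0)}`
iterations, under the second-order self-bounding assumption. -/
theorem adaptive_gd_finds_fosp_of_selfbounding (d : ℕ) (hd : 1 ≤ d)
    (F : EuclideanSpace ℝ (Fin d) → ℝ)
    (hF : ContDiff ℝ 2 F) (hFnn : ∀ w, 0 ≤ F w)
    (ρ1 : ℝ → ℝ) (hρ1mono : MonotoneOn ρ1 (Set.Ici 0))
    (hρ1cont : ContinuousOn ρ1 (Set.Ici 0))
    (hρ1pos : ∀ x ∈ Set.Ici (0 : ℝ), 0 < ρ1 x)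
    (hbound : ∀ w, ‖fderiv ℝ (fderiv ℝ F) w‖ ≤ ρ1 (F w))
    (w0 : EuclideanSpace ℝ (Fin d)) (ε : ℝ) (hε : 0 < ε)
    (L1'w0 : ℝ) (hL1'w0 : L1'w0 = ρ1 (F w0 + 1))
    (w : ℕ → EuclideanSpace ℝ (Fin d)) (hw0 : w 0 = w0)
    (hrec : ∀ t, w (t + 1) = w t -
      (min (1 / L1'w0) (1 / (sbRho0 ρ1 (F w0 + 1) * ‖gradient F (w t)‖)))
        • gradient F (w t)) :
    ∃ t : ℕ,
      (t : ℝ) ≤ 2 * F w0 / min (L1'w0 / sbRho0 ρ1 (F w0 + 1) ^ 2) (ε ^ 2 / L1'w0) ∧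
      ‖gradient F (w t)‖ ≤ ε :=
  adaptive_gd_finds_fosp_of_selfbounding_general d F hF hFnn ρ1 hρ1mono hρ1pos hbound w0 ε hε L1'w0
    hL1'w0 w hw0 hrec
end
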